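/- Let ξ > 0 be real. For N > 0 define D''(N) = √( (2N + ξ + 1)² − 4N(N+1) ) and I_c(N) = h(N + ξ) − h( (D''(N) + ξ − 1)/2 ) − h( (D''(N) − ξ − 1)/2 ). Then lim_{N→∞} I_c(N) = −log₂(e·ξ). (I_c(N) is the coherent information of the state obtained by sending half of a two-mode squeezed vacuum with local mean photon number N through the additive Gaussian noise channel of parameter ξ.) -/

import Mathlib

/-!
Since `h(x) - log₂ x = (x + 1)·log₂(1 + 1/x) → log₂ e`, up to an `o(1)` error
`I_c(N) = -log₂ e + log₂ (A / (B·C))` with `A = N + ξ`, `B = (D'' + ξ - 1)/2`, `C = (D'' - ξ - 1)/2`.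
As `D''² = 4ξN + (ξ + 1)²`, the product `B·C = ξN + (ξ + 1 - D'')/2` with `D'' = O(√N)`,
so `B·C / A → ξ`.
-/

/-- The bosonic entropy `h(x) = (x+1)·log₂(x+1) − x·log₂ x` (with `h(0) = 0`,
which holds automatically since `Real.logb 2 0 = 0`). -/
noncomputable def bosonicEntropy (x : ℝ) : ℝ :=
  (x + 1) * Real.logb 2 (x + 1) - x * Real.logb 2 x

open Filter Real Topology

lemma bosonicEntropy_sub_logb {x : ℝ} (hx : 0 < x) :
    bosonicEntropy x - logb 2 x = (x + 1) * log (1 + 1 / x) / log 2 := by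
  rw [one_add_div hx.ne', log_div (by positivity) hx.ne']
  unfold bosonicEntropy logb
  ring

lemma tendsto_bosonicEntropy_sub_logb_atTop :
    Tendsto (fun x => bosonicEntropy x - logb 2 x) atTop (𝓝 (logb 2 (exp 1))) := by
  have hlog : Tendsto (fun x : ℝ => log (1 + 1 / x)) atTop (𝓝 0) := by
    simpa using ((tendsto_const_nhds (x := (1 : ℝ))).add tendsto_inv_atTop_zero).log (by norm_num)
  have hmul : Tendsto (fun x : ℝ => (x + 1) * log (1 + 1 / x)) atTop (𝓝 1) := by
    simpa [add_mul] using (tendsto_mul_log_one_add_div_atTop 1).add hlog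
  rw [logb, log_exp]
  refine (hmul.div_const _).congr' ?_
  filter_upwards [eventually_gt_atTop 0] with x hx
  rw [bosonicEntropy_sub_logb hx]

theorem tendsto_bosonicEntropy_sub_sub {α : Type*} {l : Filter α} {a b c : α → ℝ} {ξ : ℝ}
    (hξ : 0 < ξ) (ha : Tendsto a l atTop) (hb : Tendsto b l atTop) (hc : Tendsto c l atTop)
    (hbca : Tendsto (fun n => b n * c n / a n) l (𝓝 ξ)) :
    Tendsto (fun n => bosonicEntropy (a n) - bosonicEntropy (b n) - bosonicEntropy (c n)) l
      (𝓝 (-logb 2 (exp 1 * ξ))) := by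
  have hE := tendsto_bosonicEntropy_sub_logb_atTop
  have hlim := (((hE.comp ha).sub (hE.comp hb)).sub (hE.comp hc)).sub
    ((continuousAt_logb (b := 2) hξ.ne').tendsto.comp hbca)
  rw [logb_mul (exp_ne_zero 1) hξ.ne']
  convert hlim.congr' ?_ using 2
  · ring
  filter_upwards [ha.eventually_gt_atTop 0, hb.eventually_gt_atTop 0,
    hc.eventually_gt_atTop 0] with n han hbn hcn
  simp only [Function.comp_apply]
  rw [logb_div (mul_pos hbn hcn).ne' han.ne', logb_mul hbn.ne' hcn.ne']
  ring

lemma tendsto_sqrt_add_div_atTop (p q : ℝ) :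
    Tendsto (fun N => √(p * N + q) / N) atTop (𝓝 0) := by
  have hrad : Tendsto (fun N : ℝ => p * N⁻¹ + q * (N⁻¹) ^ 2) atTop (𝓝 0) := by
    simpa using (tendsto_inv_atTop_zero.const_mul p).add
      ((tendsto_inv_atTop_zero.pow 2).const_mul q)
  refine (sqrt_zero ▸ hrad.sqrt).congr' ?_
  filter_upwards [eventually_gt_atTop 0] with N hN
  rw [show p * N⁻¹ + q * N⁻¹ ^ 2 = (p * N + q) / N ^ 2 by field_simp,
    sqrt_div' _ (by positivity), sqrt_sq hN.le]

lemma tendsto_coherentInfo_ratio {ξ : ℝ} (hξ : 0 ≤ ξ) :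
    Tendsto (fun N => (√(4 * ξ * N + (ξ + 1) ^ 2) + ξ - 1) / 2
        * ((√(4 * ξ * N + (ξ + 1) ^ 2) - ξ - 1) / 2) / (N + ξ)) atTop (𝓝 ξ) := by
  have hinv : Tendsto (fun N : ℝ => N⁻¹) atTop (𝓝 0) := tendsto_inv_atTop_zero
  have hnum := ((tendsto_const_nhds (x := ξ)).add (hinv.const_mul ((ξ + 1) / 2))).sub
    ((tendsto_sqrt_add_div_atTop (4 * ξ) ((ξ + 1) ^ 2)).div_const 2)
  have hden := (tendsto_const_nhds (x := (1 : ℝ))).add (hinv.const_mul ξ)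
  have hlim := hnum.div hden (by simp)
  simp only [mul_zero, add_zero, zero_div, sub_zero, div_one] at hlim
  refine hlim.congr' ?_
  filter_upwards [eventually_gt_atTop 0] with N hN
  have hD := sq_sqrt (by positivity : 0 ≤ 4 * ξ * N + (ξ + 1) ^ 2)
  rw [Pi.div_apply]
  set D := √(4 * ξ * N + (ξ + 1) ^ 2)
  field_simp
  linear_combination (-1) * hD

/-- For the additive Gaussian noise channel of parameter `ξ > 0`, the coherent information
`I_c(N)` of the output of half a two-mode squeezed vacuum with local mean photon number `N`
tends to `−log₂(e·ξ)` as `N → ∞`. -/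
theorem stmt9 (xi : ℝ) (hxi : 0 < xi) :
    Filter.Tendsto (fun N : ℝ =>
        bosonicEntropy (N + xi)
          - bosonicEntropy
            ((Real.sqrt ((2 * N + xi + 1) ^ 2 - 4 * N * (N + 1)) + xi - 1) / 2)
          - bosonicEntropy
            ((Real.sqrt ((2 * N + xi + 1) ^ 2 - 4 * N * (N + 1)) - xi - 1) / 2))
      Filter.atTop
      (nhds (-Real.logb 2 (Real.exp 1 * xi))) := by
  have hrad (N : ℝ) : (2 * N + xi + 1) ^ 2 - 4 * N * (N + 1) = 4 * xi * N + (xi + 1) ^ 2 := by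
    ring
  simp_rw [hrad]
  have hD : Tendsto (fun N => √(4 * xi * N + (xi + 1) ^ 2)) atTop atTop :=
    tendsto_sqrt_atTop.comp <| tendsto_atTop_add_const_right _ _ <|
      tendsto_id.const_mul_atTop (by positivity)
  have hD' (s : ℝ) : Tendsto (fun N => (√(4 * xi * N + (xi + 1) ^ 2) + s - 1) / 2) atTop atTop :=
    (tendsto_atTop_add_const_right _ _ (tendsto_atTop_add_const_right _ _ hD)).atTop_div_const
      two_pos
  exact tendsto_bosonicEntropy_sub_sub hxi (tendsto_atTop_add_const_right _ _ tendsto_id)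
    (hD' xi) (by simpa [sub_eq_add_neg] using hD' (-xi)) (tendsto_coherentInfo_ratio hxi.le)
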